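/- Elementary cellular automaton rule 9 is not Von Neumann regular in the monoid of cellular automata on {0,1}^ℤ. -/

import Mathlib

/-!
Let `z = g (f x)` for a configuration `x` whose image `f x` is `1` at `-2, -1` and `0` on
`[0, ∞)`. Since `f z = f x`, the two ones force `z 0 = 0`. On the other hand `g (0^ℤ)` is
shift-invariant, hence constant, and `f (g 0^ℤ) = f (g (f 1^ℤ)) = f 1^ℤ = 0^ℤ` forces
`g 0^ℤ = 1^ℤ`. Since `f x` is right-asymptotic to `0^ℤ`, continuity and shift-commutation make
`z` right-asymptotic to `1^ℤ`. At the last zero `M ≥ 0` of `z` we get `z` reading `011` around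
`M + 1`, so `f z (M + 1) = 1`, although `f x (M + 1) = 0`.
-/

open Filter Topology Function

namespace RuleNine

variable {α β : Type*}

def shift (x : ℤ → α) : ℤ → α := fun i => x (i + 1)

lemma shift_iterate_apply (x : ℤ → α) (n : ℕ) (i : ℤ) : shift^[n] x i = x (i + n) := by
  induction n generalizing x with
  | zero => simp
  | succ n ih =>
    rw [iterate_succ_apply, ih]
    simp only [shift, Nat.cast_succ, add_assoc]

lemma exists_eq_const_of_isFixedPt_shift {x : ℤ → α} (hx : IsFixedPt shift x) :
    ∃ c, x = fun _ => c := by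
  have hper : Periodic x 1 := fun i => congrFun hx i
  exact ⟨x 0, funext fun i => by simpa using hper.int_mul i 0⟩

lemma eventually_apply_eq_of_semiconj_shift [TopologicalSpace α] [TopologicalSpace β]
    [DiscreteTopology β] {g : (ℤ → α) → (ℤ → β)} (hg : Continuous g)
    (hcomm : Semiconj g shift shift) {x : ℤ → α} {c : α} (hx : ∀ᶠ i in atTop, x i = c) :
    ∀ᶠ i in atTop, g x i = g (fun _ => c) 0 := by
  have hshifts : Tendsto (fun n : ℕ => shift^[n] x) atTop (𝓝 fun _ => c) := by
    refine tendsto_pi_nhds.2 fun i => tendsto_const_nhds.congr' ?_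
    have hi : Tendsto (fun n : ℕ => i + n) atTop atTop :=
      tendsto_atTop_add_const_left _ _ tendsto_natCast_atTop_atTop
    filter_upwards [hi.eventually hx] with n hn
    rw [shift_iterate_apply, hn]
  have himage : Tendsto (fun n : ℕ => g x n) atTop (𝓝 (g (fun _ => c) 0)) := by
    refine ((continuous_apply 0).tendsto _).comp ((hg.tendsto _).comp hshifts) |>.congr fun n => ?_
    simp [(hcomm.iterate_right n).eq, shift_iterate_apply]
  rw [nhds_discrete, tendsto_pure] at himage
  rwa [← Nat.map_cast_int_atTop, eventually_map]

def eca9 (x : ℤ → Bool) : ℤ → Bool := fun i => !x (i - 1) && (x i == x (i + 1))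

lemma eca9_apply_eq_true_iff {x : ℤ → Bool} {i : ℤ} :
    eca9 x i = true ↔ x (i - 1) = false ∧ x i = x (i + 1) := by
  simp [eca9]

lemma eca9_const (b : Bool) : eca9 (fun _ => b) = fun _ => !b := by
  funext i
  simp [eca9]

lemma eca9_apply_add_two_eq_false {x : ℤ → Bool} {i : ℤ} (h₀ : eca9 x i = true)
    (h₁ : eca9 x (i + 1) = true) : x (i + 2) = false := by
  rw [eca9_apply_eq_true_iff, add_sub_cancel_right, add_assoc, one_add_one_eq_two] at h₁
  rw [← h₁.2, ← (eca9_apply_eq_true_iff.1 h₀).2, h₁.1]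

lemma exists_eca9_apply_eq_true_of_eventually_true {x : ℤ → Bool} {j : ℤ} (hj : x j = false)
    (hx : ∀ᶠ i in atTop, x i = true) : ∃ i > j, eca9 x i = true := by
  obtain ⟨N, hN⟩ := eventually_atTop.1 hx
  obtain ⟨M, ⟨hjM, hM⟩, hmax⟩ := Int.exists_greatest_of_bdd (P := fun i => j ≤ i ∧ x i = false)
    ⟨N, fun i hi => le_of_lt (not_le.1 fun hNi => by simp [hN i hNi] at hi)⟩ ⟨j, le_rfl, hj⟩
  have hafter : ∀ k > M, x k = true := fun k hk => by
    by_contra hk'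
    exact (hmax k ⟨by omega, by simpa using hk'⟩).not_gt hk
  refine ⟨M + 1, by omega, eca9_apply_eq_true_iff.2 ⟨by simpa using hM, ?_⟩⟩
  rw [hafter _ (by omega), hafter _ (by omega)]

def oddPositives : ℤ → Bool := fun i => decide (0 < i ∧ i % 2 = 1)

lemma eca9_oddPositives_neg_two : eca9 oddPositives (-2) = true := by decide

lemma eca9_oddPositives_neg_one : eca9 oddPositives (-1) = true := by decide

lemma eca9_oddPositives_of_nonneg {i : ℤ} (hi : 0 ≤ i) : eca9 oddPositives i = false := by
  refine Bool.eq_false_iff.2 fun h => ?_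
  have := (eca9_apply_eq_true_iff.1 h).2
  simp only [oddPositives, decide_eq_decide] at this
  omega

end RuleNine

open RuleNine in
/-- ECA rule 9 (`f(x)_i = 1` iff `x_{i-1} x_i x_{i+1} ∈ {000, 011}`) is not Von
Neumann regular in the monoid of cellular automata (shift-commuting continuous
self-maps) of `{0,1}^ℤ`. -/
theorem stmt_11
    (f : (ℤ → Bool) → (ℤ → Bool))
    (hf : ∀ x i, f x i = (!(x (i - 1)) && (x i == x (i + 1)))) :
    ¬ ∃ g : (ℤ → Bool) → (ℤ → Bool),
        Continuous g ∧
        (∀ x : ℤ → Bool, g (fun i => x (i + 1)) = fun i => g x (i + 1)) ∧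
        ∀ x, f (g (f x)) = f x := by
  rintro ⟨g, hg, hcomm : Semiconj g shift shift, hregular⟩
  obtain rfl : f = eca9 := funext fun x => funext (hf x)
  have hzero : g (fun _ => false) = fun _ => true := by
    obtain ⟨b, hb⟩ := exists_eq_const_of_isFixedPt_shift
      ((show IsFixedPt shift fun _ : ℤ => false from rfl).map hcomm)
    have := hregular fun _ => true
    rw [eca9_const, Bool.not_true, hb, eca9_const] at this
    obtain rfl : b = true := by simpa using congrFun this 0
    exact hb
  set z := g (eca9 oddPositives)
  have hz : eca9 z = eca9 oddPositives := hregular oddPositives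
  have hz0 : z 0 = false := eca9_apply_add_two_eq_false (i := -2)
    (hz ▸ eca9_oddPositives_neg_two) (hz ▸ eca9_oddPositives_neg_one)
  have htail : ∀ᶠ i in atTop, z i = true := by
    simpa [hzero] using eventually_apply_eq_of_semiconj_shift hg hcomm
      (eventually_atTop.2 ⟨0, fun i hi => eca9_oddPositives_of_nonneg hi⟩)
  obtain ⟨i, hi, hzi⟩ := exists_eca9_apply_eq_true_of_eventually_true hz0 htail
  rw [hz, eca9_oddPositives_of_nonneg hi.le] at hzi
  exact Bool.false_ne_true hzi
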